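/- arXiv:1909.10869 — 11 statements merged into one kernel-verified Lean document; each statement's English description precedes it below -/
import Mathlib

section
/- Let Σ be a type, w : ℕ → Option Σ a partial word, ζ : Σ, and u : ℕ, and let w' := Function.update w u (some ζ) (insertion of ζ at position u). If x ⤳_w y, then ¬(x ⤳_{w'} y) holds if and only if x < u and u < y. (Lemma A.1 of the paper: an insertion destroys a 'next symbol' pair exactly when it lands strictly between the two positions.) -/
/-- `y` carries the next symbol after `x` in the partial word `w`. -/
def Nxt {α : Type*} (w : ℕ → Option α) (x y : ℕ) : Prop :=
  w x ≠ none ∧ w y ≠ none ∧ x < y ∧ ∀ z, x < z → z < y → w z = none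

theorem insertion_destroys_next_iff {α : Type*} (w : ℕ → Option α) (ζ : α) (u x y : ℕ)
    (h : Nxt w x y) :
    ¬ Nxt (Function.update w u (some ζ)) x y ↔ x < u ∧ u < y := by
  obtain ⟨hx, hy, hxy, hgap⟩ := h
  constructor
  · intro hn
    by_contra hc
    apply hn
    refine ⟨?_, ?_, hxy, ?_⟩
    · simp [Function.update]; split <;> simp_all
    · simp [Function.update]; split <;> simp_all
    · intro z hz1 hz2
      have hzu : z ≠ u := by
        intro h'; subst h'; exact hc ⟨hz1, hz2⟩
      simp [Function.update_of_ne hzu]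
      exact hgap z hz1 hz2
  · rintro ⟨h1, h2⟩ ⟨_, _, _, hgap'⟩
    have := hgap' u h1 h2
    simp [Function.update_self] at this
end

section
/- Let Σ be a type, w : ℕ → Option Σ, ζ : Σ, u : ℕ with w u ≠ some ζ, and let w' := Function.update w u (some ζ). Suppose x₁ ≤ y₁ < x₂ ≤ y₂ and w[x₁,y₁] = w[x₂,y₂]. If x₁ < u < y₁ or x₂ < u < y₂, then w'[x₁,y₁] ≠ w'[x₂,y₂]. (Lemma A.3 of the paper: an insertion strictly inside one of two disjoint intervals carrying equal subwords destroys the equality.) -/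
/-!
An insertion at `u` can only change the subword of an interval containing `u`. Splitting such a
subword around `u`, the parts before and after `u` are unchanged, while the contribution of
position `u` itself becomes `[ζ]`, which differs from the old one since `w u ≠ some ζ`. As the
two intervals are disjoint, the insertion changes exactly one of two equal subwords.
-/

/-- The subword of `w` between positions `i` and `j` (inclusive). -/
def subword {α : Type*} (w : ℕ → Option α) (i j : ℕ) : List α :=
  (List.range' i (j + 1 - i)).filterMap w

theorem List.filterMap_update_of_notMem {α β : Type*} [DecidableEq α] {l : List α}
    (f : α → Option β) {a : α} (v : Option β) (ha : a ∉ l) :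
    l.filterMap (Function.update f a v) = l.filterMap f :=
  List.filterMap_congr fun _ hx => Function.update_of_ne (ne_of_mem_of_not_mem hx ha) v f

theorem List.range'_eq_append_cons {i u j : ℕ} (hiu : i ≤ u) (huj : u ≤ j) :
    List.range' i (j + 1 - i) = List.range' i (u - i) ++ u :: List.range' (u + 1) (j - u) := by
  rw [show j + 1 - i = (u - i) + (j - u + 1) by omega, ← List.range'_append, List.range'_succ,
    one_mul, Nat.add_sub_cancel' hiu]

section Subword

variable {α : Type*} (w : ℕ → Option α)

theorem subword_update_of_notMem {u i j : ℕ} (v : Option α) (hu : u < i ∨ j < u) :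
    subword (Function.update w u v) i j = subword w i j :=
  List.filterMap_update_of_notMem w v (by rw [List.mem_range'_1]; omega)

theorem subword_eq_append {u i j : ℕ} (hiu : i ≤ u) (huj : u ≤ j) :
    subword w i j = (List.range' i (u - i)).filterMap w ++ (w u).toList
      ++ (List.range' (u + 1) (j - u)).filterMap w := by
  rw [subword, List.range'_eq_append_cons hiu huj, List.filterMap_append, List.filterMap_cons,
    List.append_assoc]
  cases w u <;> rfl

theorem subword_update_ne {ζ : α} {u i j : ℕ} (hu : w u ≠ some ζ) (hiu : i ≤ u) (huj : u ≤ j) :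
    subword (Function.update w u (some ζ)) i j ≠ subword w i j := by
  have hbefore : u ∉ List.range' i (u - i) := by rw [List.mem_range'_1]; omega
  have hafter : u ∉ List.range' (u + 1) (j - u) := by rw [List.mem_range'_1]; omega
  rw [subword_eq_append _ hiu huj, subword_eq_append _ hiu huj, Function.update_self,
    List.filterMap_update_of_notMem w _ hbefore, List.filterMap_update_of_notMem w _ hafter]
  intro h
  exact hu (Option.toList_eq_singleton_iff.mp
    (List.append_cancel_left (List.append_cancel_right h)).symm)

end Subword

theorem insertion_inside_destroys_equality_general {α : Type*} (w : ℕ → Option α) (ζ : α)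
    (u x₁ y₁ x₂ y₂ : ℕ) (hu : w u ≠ some ζ)
    (h₂ : y₁ < x₂)
    (heq : subword w x₁ y₁ = subword w x₂ y₂)
    (hin : (x₁ < u ∧ u < y₁) ∨ (x₂ < u ∧ u < y₂)) :
    subword (Function.update w u (some ζ)) x₁ y₁ ≠
      subword (Function.update w u (some ζ)) x₂ y₂ := by
  rcases hin with ⟨hxu, huy⟩ | ⟨hxu, huy⟩
  · rw [subword_update_of_notMem w (i := x₂) (j := y₂) _ (by omega), ← heq]
    exact subword_update_ne w hu hxu.le huy.le
  · rw [subword_update_of_notMem w (i := x₁) (j := y₁) _ (by omega), heq]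
    exact (subword_update_ne w hu hxu.le huy.le).symm

theorem insertion_inside_destroys_equality {α : Type*} (w : ℕ → Option α) (ζ : α)
    (u x₁ y₁ x₂ y₂ : ℕ) (hu : w u ≠ some ζ)
    (h₁ : x₁ ≤ y₁) (h₂ : y₁ < x₂) (h₃ : x₂ ≤ y₂)
    (heq : subword w x₁ y₁ = subword w x₂ y₂)
    (hin : (x₁ < u ∧ u < y₁) ∨ (x₂ < u ∧ u < y₂)) :
    subword (Function.update w u (some ζ)) x₁ y₁ ≠
      subword (Function.update w u (some ζ)) x₂ y₂ :=
  insertion_inside_destroys_equality_general w ζ u x₁ y₁ x₂ y₂ hu h₂ heq hin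
end

section
/- Let Σ be a type, w : ℕ → Option Σ, ζ : Σ, u : ℕ, and let w' := Function.update w u (some ζ). Then for all x, y : ℕ, x ⤳_{w'} y holds if and only if one of the following holds: (i) x ⤳_w y and (u ≤ x or y ≤ u); (ii) u = x, first_w y, and u < y; (iii) u = x and there exists v with v ⤳_w y, v < u, and u < y; (iv) u = y, last_w x, and x < u; (v) u = y and there exists v with x ⤳_w v, x < u, and u < v. (Semantic correctness of the insertion update formula for the next-symbol relation in Lemma 3.2 of the paper.) -/
/-- `y` carries the first symbol of the partial word `w`. -/
def FirstSym {α : Type*} (w : ℕ → Option α) (y : ℕ) : Prop :=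
  w y ≠ none ∧ ∀ z, z < y → w z = none

/-- `x` carries the last symbol of the partial word `w`. -/
def LastSym {α : Type*} (w : ℕ → Option α) (x : ℕ) : Prop :=
  w x ≠ none ∧ ∀ z, x < z → w z = none

private lemma exists_greatest_lt {P : ℕ → Prop} {n : ℕ} (h : ∃ v, v < n ∧ P v) :
    ∃ v, v < n ∧ P v ∧ ∀ z, v < z → z < n → ¬ P z := by
  classical
  obtain ⟨v, hv, hp⟩ := h
  refine ⟨Nat.findGreatest P (n - 1), ?_, ?_, ?_⟩
  · have := Nat.findGreatest_le (P := P) (n - 1)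
    omega
  · exact Nat.findGreatest_spec (by omega) hp
  · intro z hz hzn
    exact Nat.findGreatest_is_greatest hz (by omega)

theorem next_insertion_update_correct {α : Type*} (w : ℕ → Option α) (ζ : α) (u : ℕ) :
    ∀ x y : ℕ,
      Nxt (Function.update w u (some ζ)) x y ↔
        (Nxt w x y ∧ (u ≤ x ∨ y ≤ u)) ∨
        (u = x ∧ FirstSym w y ∧ u < y) ∨
        (u = x ∧ ∃ v, Nxt w v y ∧ v < u ∧ u < y) ∨
        (u = y ∧ LastSym w x ∧ x < u) ∨
        (u = y ∧ ∃ v, Nxt w x v ∧ x < u ∧ u < v) := by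
  classical
  intro x y
  constructor
  · rintro ⟨hx, hy, hxy, hgap⟩
    by_cases hux : u = x
    · subst hux
      have hy' : w y ≠ none := by rwa [Function.update_of_ne (by omega)] at hy
      have hgap' : ∀ z, u < z → z < y → w z = none := by
        intro z h1 h2
        have := hgap z h1 h2
        rwa [Function.update_of_ne (by omega)] at this
      by_cases hwu : w u = none
      · by_cases hfirst : ∀ z < y, w z = none
        · exact Or.inr (Or.inl ⟨rfl, ⟨hy', hfirst⟩, hxy⟩)
        · push_neg at hfirst
          obtain ⟨v, hvy, hv⟩ := hfirst
          have hvu : v < u := by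
            rcases lt_trichotomy v u with h | h | h
            · exact h
            · exact absurd hwu (h ▸ hv)
            · exact absurd (hgap' v h hvy) hv
          obtain ⟨m, hmu, hm, hmax⟩ := exists_greatest_lt (P := fun z => w z ≠ none) ⟨v, hvu, hv⟩
          refine Or.inr (Or.inr (Or.inl ⟨rfl, m, ⟨hm, hy', by omega, ?_⟩, hmu, hxy⟩))
          intro z h1 h2
          rcases lt_trichotomy z u with h | h | h
          · by_contra hne; exact hmax z h1 h hne
          · exact h ▸ hwu
          · exact hgap' z h h2
      · refine Or.inl ⟨⟨hwu, hy', hxy, ?_⟩, Or.inl le_rfl⟩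
        exact hgap'
    · by_cases huy : u = y
      · subst huy
        have hx' : w x ≠ none := by rwa [Function.update_of_ne (by omega)] at hx
        have hgap' : ∀ z, x < z → z < u → w z = none := by
          intro z h1 h2
          have := hgap z h1 h2
          rwa [Function.update_of_ne (by omega)] at this
        by_cases hwu : w u = none
        · by_cases hlast : ∀ z, x < z → w z = none
          · exact Or.inr (Or.inr (Or.inr (Or.inl ⟨rfl, ⟨hx', hlast⟩, hxy⟩)))
          · push_neg at hlast
            obtain ⟨v, hvx, hv⟩ := hlast
            have huv : u < v := by
              rcases lt_trichotomy v u with h | h | h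
              · exact absurd (hgap' v hvx h) hv
              · exact absurd hwu (h ▸ hv)
              · exact h
            have hexmin : ∃ z, x < z ∧ w z ≠ none := ⟨v, hvx, hv⟩
            set m := Nat.find hexmin with hmdef
            obtain ⟨hmx, hmns⟩ := Nat.find_spec hexmin
            have hum : u < m := by
              rcases lt_trichotomy m u with h | h | h
              · exact absurd (hgap' m hmx h) hmns
              · exact absurd hwu (h ▸ hmns)
              · exact h
            refine Or.inr (Or.inr (Or.inr (Or.inr ⟨rfl, m, ⟨hx', hmns, by omega, ?_⟩, hxy, hum⟩)))
            intro z h1 h2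
            by_contra hne
            exact Nat.find_min hexmin h2 ⟨h1, hne⟩
        · exact Or.inl ⟨⟨hx', hwu, hxy, hgap'⟩, Or.inr le_rfl⟩
      · have hx' : w x ≠ none := by rwa [Function.update_of_ne (by omega)] at hx
        have hy' : w y ≠ none := by rwa [Function.update_of_ne (by omega)] at hy
        have hside : u ≤ x ∨ y ≤ u := by
          by_contra hc
          push_neg at hc
          have := hgap u (by omega) (by omega)
          simp [Function.update_self] at this
        refine Or.inl ⟨⟨hx', hy', hxy, ?_⟩, hside⟩
        intro z h1 h2
        have := hgap z h1 h2
        rwa [Function.update_of_ne (by omega)] at this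
  · rintro (⟨⟨hx, hy, hxy, hgap⟩, hside⟩ | ⟨rfl, ⟨hy, hfirst⟩, huy⟩ |
      ⟨rfl, v, ⟨hv, hy, hvy, hgap⟩, hvu, huy⟩ | ⟨rfl, ⟨hx, hlast⟩, hxu⟩ |
      ⟨rfl, v, ⟨hx, hv, hxv, hgap⟩, hxu, huv⟩)
    · refine ⟨?_, ?_, hxy, ?_⟩
      · by_cases h : x = u
        · subst h; simp [Function.update_self]
        · rwa [Function.update_of_ne h]
      · by_cases h : y = u
        · subst h; simp [Function.update_self]
        · rwa [Function.update_of_ne h]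
      · intro z h1 h2
        rw [Function.update_of_ne (by omega)]
        exact hgap z h1 h2
    · refine ⟨by simp [Function.update_self], by rwa [Function.update_of_ne (by omega)], huy, ?_⟩
      intro z h1 h2
      rw [Function.update_of_ne (by omega)]
      exact hfirst z h2
    · refine ⟨by simp [Function.update_self], by rwa [Function.update_of_ne (by omega)], huy, ?_⟩
      intro z h1 h2
      rw [Function.update_of_ne (by omega)]
      exact hgap z (by omega) h2
    · refine ⟨by rwa [Function.update_of_ne (by omega)], by simp [Function.update_self], hxu, ?_⟩
      intro z h1 h2
      rw [Function.update_of_ne (by omega)]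
      exact hlast z h1
    · refine ⟨by rwa [Function.update_of_ne (by omega)], by simp [Function.update_self], hxu, ?_⟩
      intro z h1 h2
      rw [Function.update_of_ne (by omega)]
      exact hgap z h1 (by omega)
end

section
/- Let Σ be a type, w : ℕ → Option Σ, and u : ℕ with w u ≠ none, and let w' := Function.update w u none. Then for all x, y : ℕ, x ⤳_{w'} y holds if and only if either (x ⤳_w y and (u < x or y < u)) or (x ⤳_w u and u ⤳_w y). (Semantic correctness of the reset update formula for the next-symbol relation in Lemma 3.2 of the paper.) -/
theorem next_reset_update_correct {α : Type*} (w : ℕ → Option α) (u : ℕ)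
    (hu : w u ≠ none) :
    ∀ x y : ℕ,
      Nxt (Function.update w u none) x y ↔
        (Nxt w x y ∧ (u < x ∨ y < u)) ∨ (Nxt w x u ∧ Nxt w u y) := by
  intro x y
  constructor
  · rintro ⟨hx, hy, hxy, hgap⟩
    have hxu : x ≠ u := by intro h; subst h; simp [Function.update_self] at hx
    have hyu : y ≠ u := by intro h; subst h; simp [Function.update_self] at hy
    rw [Function.update_of_ne hxu] at hx
    rw [Function.update_of_ne hyu] at hy
    by_cases hcase : u < x ∨ y < u
    · left
      refine ⟨⟨hx, hy, hxy, fun z h1 h2 => ?_⟩, hcase⟩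
      have hz := hgap z h1 h2
      rwa [Function.update_of_ne (by omega)] at hz
    · right
      have hxu' : x < u := by omega
      have huy : u < y := by omega
      refine ⟨⟨hx, hu, hxu', fun z h1 h2 => ?_⟩, ⟨hu, hy, huy, fun z h1 h2 => ?_⟩⟩
      · have hz := hgap z h1 (by omega)
        rwa [Function.update_of_ne (by omega)] at hz
      · have hz := hgap z (by omega) h2
        rwa [Function.update_of_ne (by omega)] at hz
  · rintro (⟨⟨hx, hy, hxy, hgap⟩, hcase⟩ | ⟨⟨hx, _, hxu, hgap1⟩, ⟨_, hy, huy, hgap2⟩⟩)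
    · refine ⟨?_, ?_, hxy, fun z h1 h2 => ?_⟩
      · rwa [Function.update_of_ne (by omega)]
      · rwa [Function.update_of_ne (by omega)]
      · by_cases hz : z = u
        · subst hz; simp [Function.update_self]
        · rw [Function.update_of_ne hz]; exact hgap z h1 h2
    · refine ⟨?_, ?_, by omega, fun z h1 h2 => ?_⟩
      · rwa [Function.update_of_ne (by omega)]
      · rwa [Function.update_of_ne (by omega)]
      · by_cases hz : z = u
        · subst hz; simp [Function.update_self]
        · rw [Function.update_of_ne hz]
          rcases lt_or_gt_of_ne hz with h | h
          · exact hgap1 z h1 h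
          · exact hgap2 z h h2
end

section
/- Let Σ be a type, w : ℕ → Option Σ, ζ : Σ, and u : ℕ with w u = none, and let w' := Function.update w u (some ζ). Then for all x : ℕ, first_{w'} x holds if and only if (first_w x and x < u), or (u = x and there exists y with first_w y and u < y), or (u = x and w z = none for all z). (Correctness of the first-symbol update under insertion, proved within Lemma 3.2 of the paper; the last disjunct corresponds to the paper's treatment of the empty word via the $-initialization.) -/
theorem first_insertion_update_correct {α : Type*} (w : ℕ → Option α) (ζ : α) (u : ℕ)
    (hu : w u = none) :
    ∀ x : ℕ,
      FirstSym (Function.update w u (some ζ)) x ↔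
        (FirstSym w x ∧ x < u) ∨
        (u = x ∧ ∃ y, FirstSym w y ∧ u < y) ∨
        (u = x ∧ ∀ z, w z = none) := by
  classical
  intro x
  constructor
  · rintro ⟨h1, h2⟩
    by_cases hx : x = u
    · subst hx
      by_cases hall : ∀ z, w z = none
      · exact Or.inr (Or.inr ⟨rfl, hall⟩)
      · push_neg at hall
        have hex : ∃ y, w y ≠ none := hall
        set y := Nat.find hex with hy
        have hyn : w y ≠ none := Nat.find_spec hex
        have hymin : ∀ z, z < y → w z = none := fun z hz => by
          by_contra hc; exact Nat.find_min hex hz hc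
        refine Or.inr (Or.inl ⟨rfl, y, ⟨hyn, hymin⟩, ?_⟩)
        rcases lt_trichotomy x y with h | h | h
        · exact h
        · exact absurd (h ▸ hu) hyn
        · have hyu : y ≠ x := fun h' => hyn (h' ▸ hu)
          have := h2 y h
          rw [Function.update_apply, if_neg hyu] at this
          exact absurd this hyn
    · left
      have hux : ¬ u < x := fun hlt => by
        have := h2 u hlt
        simp [Function.update_self] at this
      refine ⟨⟨?_, fun z hz => ?_⟩, by omega⟩
      · rwa [Function.update_apply, if_neg hx] at h1
      · have := h2 z hz
        rwa [Function.update_apply, if_neg (fun h : z = u => hux (h ▸ hz))] at this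
  · rintro (⟨⟨hx1, hx2⟩, hxu⟩ | ⟨rfl, y, ⟨hy1, hy2⟩, huy⟩ | ⟨rfl, hall⟩)
    · refine ⟨?_, fun z hz => ?_⟩
      · rwa [Function.update_apply, if_neg (by omega : x ≠ u)]
      · rw [Function.update_apply, if_neg (by omega : z ≠ u)]; exact hx2 z hz
    · refine ⟨by simp, fun z hz => ?_⟩
      rw [Function.update_apply, if_neg (by omega : z ≠ u)]
      exact hy2 z (hz.trans huy)
    · exact ⟨by simp, fun z hz => by
        rw [Function.update_apply, if_neg (by omega : z ≠ u)]; exact hall z⟩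
end

section
/- Let Σ be a type, w : ℕ → Option Σ, and u : ℕ with w u ≠ none, and let w' := Function.update w u none. Then for all x : ℕ, first_{w'} x holds if and only if (first_w x and x < u) or (first_w u and u ⤳_w x). (Correctness of the first-symbol update under reset, proved within Lemma 3.2 of the paper.) -/
theorem first_reset_update_correct {α : Type*} (w : ℕ → Option α) (u : ℕ)
    (hu : w u ≠ none) :
    ∀ x : ℕ,
      FirstSym (Function.update w u none) x ↔
        (FirstSym w x ∧ x < u) ∨ (FirstSym w u ∧ Nxt w u x) := by
  intro x
  constructor
  · rintro ⟨hx, hall⟩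
    have hxu : x ≠ u := by
      intro h; subst h; simp [Function.update_self] at hx
    rw [Function.update_of_ne hxu] at hx
    rcases lt_or_gt_of_ne hxu with h | h
    · left
      refine ⟨⟨hx, fun z hz => ?_⟩, h⟩
      have := hall z hz
      rwa [Function.update_of_ne (by omega)] at this
    · right
      have hz' : ∀ z, z < x → z ≠ u → w z = none := by
        intro z hz hzu
        have := hall z hz
        rwa [Function.update_of_ne hzu] at this
      exact ⟨⟨hu, fun z hz => hz' z (by omega) (by omega)⟩,
        hu, hx, h, fun z h1 h2 => hz' z h2 (by omega)⟩
  · rintro (⟨⟨hx, hall⟩, hxu⟩ | ⟨⟨_, hfu⟩, _, hx, hux, hbet⟩)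
    · refine ⟨by rwa [Function.update_of_ne (by omega)], fun z hz => ?_⟩
      rcases eq_or_ne z u with rfl | hzu
      · simp
      · rw [Function.update_of_ne hzu]; exact hall z hz
    · refine ⟨by rwa [Function.update_of_ne (by omega)], fun z hz => ?_⟩
      rcases eq_or_ne z u with rfl | hzu
      · simp
      · rw [Function.update_of_ne hzu]
        rcases lt_or_gt_of_ne hzu with h | h
        · exact hfu z h
        · exact hbet z h hz
end

section
/- Let Σ be a type, w : ℕ → Option Σ, ζ : Σ, and u : ℕ with w u = none, and let w' := Function.update w u (some ζ). Then for all x : ℕ, last_{w'} x holds if and only if (last_w x and u < x), or (u = x and there exists y with last_w y and y < u), or (u = x and w z = none for all z). (Correctness of the last-symbol update under insertion, proved within Lemma 3.2 of the paper.) -/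
theorem last_insertion_update_correct {α : Type*} (w : ℕ → Option α) (ζ : α) (u : ℕ)
    (hu : w u = none) :
    ∀ x : ℕ,
      LastSym (Function.update w u (some ζ)) x ↔
        (LastSym w x ∧ u < x) ∨
        (u = x ∧ ∃ y, LastSym w y ∧ y < u) ∨
        (u = x ∧ ∀ z, w z = none) := by
  classical
  intro x
  constructor
  · rintro ⟨hx, hz⟩
    have hux : u ≤ x := by
      by_contra h
      push_neg at h
      have := hz u h
      simp [Function.update_self] at this
    rcases lt_or_eq_of_le hux with h | h
    · left
      have hxu : x ≠ u := by omega
      refine ⟨⟨by simpa [Function.update_of_ne hxu] using hx, fun z hz' => ?_⟩, h⟩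
      have hzu : z ≠ u := by omega
      have := hz z hz'
      simpa [Function.update_of_ne hzu] using this
    · subst h
      by_cases hall : ∀ z, w z = none
      · exact Or.inr (Or.inr ⟨rfl, hall⟩)
      · push_neg at hall
        obtain ⟨y, hy⟩ := hall
        have hwz : ∀ z, u < z → w z = none := fun z hz' => by
          have hzu : z ≠ u := by omega
          simpa [Function.update_of_ne hzu] using hz z hz'
        have hyu : y < u := by
          rcases lt_trichotomy y u with h' | h' | h'
          · exact h'
          · exact absurd (h' ▸ hu) hy
          · exact absurd (hwz y h') hy
        set P := fun n => w n ≠ none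
        have hyP : P y := hy
        refine Or.inr (Or.inl ⟨rfl, Nat.findGreatest P u, ⟨Nat.findGreatest_spec (le_of_lt hyu) hyP, fun z hz' => ?_⟩, ?_⟩)
        · by_cases hzu : z ≤ u
          · by_contra hne
            have := Nat.le_findGreatest (P := P) hzu hne
            omega
          · exact hwz z (by omega)
        · have hle : Nat.findGreatest P u ≤ u := Nat.findGreatest_le u
          rcases lt_or_eq_of_le hle with h' | h'
          · exact h'
          · exact absurd (h'.symm ▸ hu) (Nat.findGreatest_spec (le_of_lt hyu) hyP)
  · rintro (⟨⟨hx, hz⟩, hux⟩ | ⟨rfl, y, ⟨hy, hyz⟩, hyu⟩ | ⟨rfl, hall⟩)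
    · have hxu : x ≠ u := by omega
      refine ⟨by simpa [Function.update_of_ne hxu] using hx, fun z hz' => ?_⟩
      have hzu : z ≠ u := by omega
      simpa [Function.update_of_ne hzu] using hz z hz'
    · refine ⟨by simp, fun z hz' => ?_⟩
      have hzu : z ≠ u := by omega
      simpa [Function.update_of_ne hzu] using hyz z (by omega)
    · refine ⟨by simp, fun z hz' => ?_⟩
      have hzu : z ≠ u := by omega
      simpa [Function.update_of_ne hzu] using hall z
end

section
/- Let Σ be a type, w : ℕ → Option Σ, and u : ℕ with w u ≠ none, and let w' := Function.update w u none. Then for all x : ℕ, last_{w'} x holds if and only if (last_w x and u < x) or (last_w u and x ⤳_w u). (Correctness of the last-symbol update under reset, proved within Lemma 3.2 of the paper.) -/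
theorem last_reset_update_correct {α : Type*} (w : ℕ → Option α) (u : ℕ)
    (hu : w u ≠ none) :
    ∀ x : ℕ,
      LastSym (Function.update w u none) x ↔
        (LastSym w x ∧ u < x) ∨ (LastSym w u ∧ Nxt w x u) := by
  intro x
  constructor
  · rintro ⟨hx, hlast⟩
    have hxu : x ≠ u := by
      intro h; subst h; simp [Function.update_self] at hx
    rw [Function.update_of_ne hxu] at hx
    rcases lt_or_gt_of_ne hxu with hlt | hgt
    · right
      refine ⟨⟨hu, fun z hz => ?_⟩, ?_⟩
      · have := hlast z (lt_trans hlt hz)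
        rwa [Function.update_of_ne (by omega)] at this
      · exact ⟨hx, hu, hlt, fun z hz1 hz2 => by
          have := hlast z hz1
          rwa [Function.update_of_ne (by omega)] at this⟩
    · left
      refine ⟨⟨hx, fun z hz => ?_⟩, hgt⟩
      have := hlast z hz
      rwa [Function.update_of_ne (by omega)] at this
  · rintro (⟨⟨hx, hlast⟩, hux⟩ | ⟨⟨hwu, hulast⟩, ⟨hx, _, hxu, hbetween⟩⟩)
    · refine ⟨?_, fun z hz => ?_⟩
      · rwa [Function.update_of_ne (by omega)]
      · rw [Function.update_of_ne (by omega)]; exact hlast z hz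
    · refine ⟨?_, fun z hz => ?_⟩
      · rwa [Function.update_of_ne (by omega)]
      · rcases eq_or_ne z u with rfl | hzu
        · simp [Function.update_self]
        · rw [Function.update_of_ne hzu]
          rcases lt_trichotomy z u with h | rfl | h
          · exact hbetween z hz h
          · exact absurd rfl hzu
          · exact hulast z h
end

section
/- Let Σ be a type, w : ℕ → Option Σ, ζ : Σ, u : ℕ, and let w' := Function.update w u (some ζ). Suppose there are positions with u ⤳_{w'} v₁, v₁ ≤ x_c, x_c < y_o, y_o ⤳_{w'} v₂, v₂ ≤ y_c, such that w' y_o = some ζ and w[v₁,x_c] = w[v₂,y_c]. Then w'[u,x_c] = w'[y_o,y_c]. (Case 3.1 of the proof of Lemma 3.4 of the paper: insertion at the left endpoint of the first interval, matching the symbol at the left endpoint of the second interval.) -/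
/-!
Both subwords start with `ζ` (inserted at `u`, resp. already at `yo`) and continue from the next
symbol, `v₁` resp. `v₂`. Both continuations lie strictly to the right of `u`, where the insertion
changes nothing, so they are the two subwords of `w` assumed equal.
-/

section Subword

variable {α : Type*}

lemma subword_congr {w w' : ℕ → Option α} {i j : ℕ}
    (h : ∀ k, i ≤ k → k ≤ j → w k = w' k) : subword w i j = subword w' i j := by
  refine List.filterMap_congr fun k hk => ?_
  rw [List.mem_range'_1] at hk
  exact h k hk.1 (by omega)

lemma subword_update_of_lt (w : ℕ → Option α) (a : Option α) {u i j : ℕ} (hu : u < i) :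
    subword (Function.update w u a) i j = subword w i j :=
  subword_congr fun _ hk _ => Function.update_of_ne (by omega) _ _

lemma subword_eq_cons_of_eq_some {w : ℕ → Option α} {i j : ℕ} {a : α}
    (hi : w i = some a) (hij : i ≤ j) : subword w i j = a :: subword w (i + 1) j := by
  unfold subword
  rw [show j + 1 - i = (j - i) + 1 by omega, List.range'_succ, List.filterMap_cons, hi,
    show j + 1 - (i + 1) = j - i by omega]

lemma subword_eq_of_forall_eq_none {w : ℕ → Option α} {i y j : ℕ} (hiy : i ≤ y) (hyj : y ≤ j + 1)
    (h : ∀ k, i ≤ k → k < y → w k = none) : subword w i j = subword w y j := by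
  unfold subword
  have hsplit : List.range' i (j + 1 - i) = List.range' i (y - i) ++ List.range' y (j + 1 - y) := by
    have hcat := @List.range'_append_1 i (y - i) (j + 1 - y)
    rw [Nat.add_sub_cancel' hiy] at hcat
    rw [hcat]
    congr 1
    omega
  have hgap : (List.range' i (y - i)).filterMap w = [] := by
    refine List.filterMap_eq_nil_iff.2 fun k hk => ?_
    rw [List.mem_range'_1] at hk
    exact h k hk.1 (by omega)
  rw [hsplit, List.filterMap_append, hgap, List.nil_append]

lemma Nxt.subword_eq_cons {w : ℕ → Option α} {x y j : ℕ} {a : α}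
    (hn : Nxt w x y) (hx : w x = some a) (hj : y ≤ j) :
    subword w x j = a :: subword w y j := by
  obtain ⟨-, -, hxy, hgap⟩ := hn
  rw [subword_eq_cons_of_eq_some hx (by omega),
    subword_eq_of_forall_eq_none (by omega) (by omega) fun k hk hky => hgap k (by omega) hky]

end Subword

theorem insertion_left_endpoint_case {α : Type*} (w : ℕ → Option α) (ζ : α)
    (u xc yo yc v₁ v₂ : ℕ)
    (hn₁ : Nxt (Function.update w u (some ζ)) u v₁) (h₁ : v₁ ≤ xc) (h₂ : xc < yo)
    (hn₂ : Nxt (Function.update w u (some ζ)) yo v₂) (h₃ : v₂ ≤ yc)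
    (hy : (Function.update w u (some ζ)) yo = some ζ)
    (heq : subword w v₁ xc = subword w v₂ yc) :
    subword (Function.update w u (some ζ)) u xc =
      subword (Function.update w u (some ζ)) yo yc := by
  have hu₁ : u < v₁ := hn₁.2.2.1
  have hu₂ : u < v₂ := by have := hn₂.2.2.1; omega
  rw [hn₁.subword_eq_cons (Function.update_self _ _ _) h₁, hn₂.subword_eq_cons hy h₃,
    subword_update_of_lt _ _ hu₁, subword_update_of_lt _ _ hu₂, heq]
end

section
/- Let Σ be a type, w : ℕ → Option Σ, u : ℕ, and let w' := Function.update w u none. Suppose there are positions with x_o ≤ z₁, z₁ ⤳_w u, u ⤳_w z₂, z₂ ≤ x_c, x_c < y_o, y_o ≤ z₃, z₃ ⤳_w z₄, z₄ ≤ y_c, such that w[x_o,z₁] = w[y_o,z₃] and w[z₂,x_c] = w[z₄,y_c]. Then w'[x_o,x_c] = w'[y_o,y_c]. (The reset case ψ₇ in the proof of Lemma 3.4 of the paper: deleting a symbol strictly inside the first interval when the second interval has an adjacent pair of matching pieces yields equal subwords.) -/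
/-
Resetting `u` closes the gap `z₁ ⤳ u ⤳ z₂` into a single gap `z₁ ⤳ z₂`, and a subword is the
concatenation of the two pieces on either side of any gap. So the left subword becomes
`w[x_o,z₁] ++ w[z₂,x_c]`, and the right one, untouched by the reset since `u < y_o`, splits at
`z₃ ⤳ z₄` into `w[y_o,z₃] ++ w[z₄,y_c]`; the hypotheses identify the pieces.
-/

section Subword

variable {α : Type*} (v : ℕ → Option α)

theorem subword_append_subword {i a j : ℕ} (hia : i ≤ a + 1) (haj : a ≤ j) :
    subword v i a ++ subword v (a + 1) j = subword v i j := by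
  unfold subword
  rw [← List.filterMap_append]
  congr 1
  convert List.range'_append_1 (s := i) (m := a + 1 - i) (n := j - a) using 3 <;> omega

theorem subword_eq_nil {i j : ℕ} (h : ∀ z, i ≤ z → z ≤ j → v z = none) :
    subword v i j = [] := by
  refine List.filterMap_eq_nil_iff.2 fun z hz => ?_
  rw [List.mem_range'_1] at hz
  exact h z hz.1 (by omega)

theorem subword_update_of_lt_or_lt (o : Option α) {u i j : ℕ} (h : u < i ∨ j < u) :
    subword (Function.update v u o) i j = subword v i j := by
  refine List.filterMap_congr fun z hz => ?_
  rw [List.mem_range'_1] at hz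
  exact Function.update_of_ne (by omega) _ _

variable {v}

theorem subword_eq_append_of_nxt {a b : ℕ} (hab : Nxt v a b) {i j : ℕ} (hia : i ≤ a)
    (hbj : b ≤ j) : subword v i j = subword v i a ++ subword v b j := by
  obtain ⟨-, -, hlt, hgap⟩ := hab
  have hnil : subword v (a + 1) (b - 1) = [] :=
    subword_eq_nil v fun z hz₁ hz₂ => hgap z (by omega) (by omega)
  rw [← subword_append_subword v (by omega : i ≤ a + 1) (by omega : a ≤ j),
    ← subword_append_subword v (by omega : a + 1 ≤ b - 1 + 1) (by omega : b - 1 ≤ j), hnil,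
    List.nil_append, Nat.sub_add_cancel (by omega : 1 ≤ b)]

end Subword

theorem Nxt.update_none {α : Type*} {w : ℕ → Option α} {x u y : ℕ} (hxu : Nxt w x u)
    (huy : Nxt w u y) : Nxt (Function.update w u none) x y := by
  obtain ⟨hx, -, hxu, hgap₁⟩ := hxu
  obtain ⟨-, hy, huy, hgap₂⟩ := huy
  refine ⟨by rwa [Function.update_of_ne hxu.ne], by rwa [Function.update_of_ne huy.ne'],
    hxu.trans huy, fun z hz₁ hz₂ => ?_⟩
  rcases lt_trichotomy z u with hzu | rfl | hzu
  · rw [Function.update_of_ne hzu.ne]; exact hgap₁ z hz₁ hzu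
  · exact Function.update_self ..
  · rw [Function.update_of_ne hzu.ne']; exact hgap₂ z hzu hz₂

theorem reset_inside_case {α : Type*} (w : ℕ → Option α)
    (u xo xc yo yc z₁ z₂ z₃ z₄ : ℕ)
    (h₁ : xo ≤ z₁) (hn₁ : Nxt w z₁ u) (hn₂ : Nxt w u z₂) (h₂ : z₂ ≤ xc)
    (h₃ : xc < yo) (h₄ : yo ≤ z₃) (hn₃ : Nxt w z₃ z₄) (h₅ : z₄ ≤ yc)
    (heq₁ : subword w xo z₁ = subword w yo z₃)
    (heq₂ : subword w z₂ xc = subword w z₄ yc) :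
    subword (Function.update w u none) xo xc =
      subword (Function.update w u none) yo yc := by
  have hz₁u := hn₁.2.2.1
  have huz₂ := hn₂.2.2.1
  rw [subword_eq_append_of_nxt (hn₁.update_none hn₂) h₁ h₂,
    subword_update_of_lt_or_lt w none (.inr hz₁u), subword_update_of_lt_or_lt w none (.inl huz₂),
    subword_update_of_lt_or_lt w none (.inl (by omega)), subword_eq_append_of_nxt hn₃ h₄ h₅,
    heq₁, heq₂]
end

section
/- Let Σ and Ξ be types, let p : List (Σ ⊕ Ξ) be a pattern, and let w : List Σ. Then w lies in the non-erasing pattern language of p (i.e., w = apply σ p for some substitution σ : Ξ → List Σ with σ x ≠ [] for every variable x occurring in p) if and only if there exists a list L : List (List Σ) with L.length = p.length and w = L.join such that for every index i < p.length: if the i-th entry of p is a terminal Sum.inl a then the i-th entry of L is [a]; if the i-th entry of p is a variable Sum.inr x then the i-th entry of L is nonempty; and for every index j < p.length whose entry is a variable Sum.inr x such that some earlier index carries the same variable, the j-th entry of L equals the i-th entry of L, where i is the largest index smaller than j carrying the variable Sum.inr x. (The word-level correctness of Algorithm 1 in Lemma 3.6 of the paper: checking equality only against the most recent previous occurrence of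 each variable characterizes membership in the non-erasing pattern language.) -/
/-!
A substitution cuts a word of the pattern language into the blocks `L`, one per pattern
position. Conversely, a segmentation `L` comes from a substitution as soon as all
occurrences of each variable carry the same block, and for that it suffices to compare each
occurrence with the previous one: equality then propagates along the chain of occurrences.
-/

/-- Applying a substitution `σ` to a pattern `p`: terminals map to one-element lists,
variables map to their image under `σ`. -/
def applySubst {A Ξ : Type*} (σ : Ξ → List A) (p : List (A ⊕ Ξ)) : List A :=
  (p.map (Sum.elim (fun a => [a]) σ)).flatten

theorem Nat.eq_of_eq_on_consecutive {α : Type*} {P : ℕ → Prop} {f : ℕ → α}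
    (hstep : ∀ i j, i < j → P i → P j → (∀ k, i < k → k < j → ¬ P k) → f j = f i)
    {i j : ℕ} (hi : P i) (hj : P j) (hij : i ≤ j) : f j = f i := by
  classical
  induction j using Nat.strong_induction_on with
  | _ j ih =>
    rcases hij.eq_or_lt with rfl | hlt
    · rfl
    set k := Nat.findGreatest P (j - 1)
    have hik : i ≤ k := Nat.le_findGreatest (by omega) hi
    have hk : P k := Nat.findGreatest_spec (m := i) (by omega) hi
    have hkj : k < j := (Nat.findGreatest_le _).trans_lt (by omega)
    have hgap : ∀ k', k < k' → k' < j → ¬ P k' := fun k' h₁ _ =>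
      Nat.findGreatest_is_greatest h₁ (by omega)
    rw [hstep k j hkj hk hj hgap]
    exact ih k hkj hk hik

theorem List.exists_eq_map_sumElim_of_getElem? {A Ξ : Type*} {p : List (A ⊕ Ξ)}
    {L : List (List A)} (hlen : L.length = p.length)
    (hterm : ∀ (i : ℕ) (a : A), p[i]? = some (Sum.inl a) → L[i]? = some [a])
    (hvar : ∀ (x : Ξ) (i j : ℕ), p[i]? = some (Sum.inr x) → p[j]? = some (Sum.inr x) →
      L[j]? = L[i]?) :
    ∃ σ : Ξ → List A, L = p.map (Sum.elim (fun a => [a]) σ) := by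
  classical
  let σ : Ξ → List A := fun x =>
    if h : ∃ i : ℕ, p[i]? = some (Sum.inr x) then (L[h.choose]?).getD [] else []
  have hσ : ∀ x (i : ℕ), p[i]? = some (Sum.inr x) → L[i]? = some (σ x) := by
    intro x i hi
    have hex : ∃ i : ℕ, p[i]? = some (Sum.inr x) := ⟨i, hi⟩
    have hlt : hex.choose < L.length := hlen ▸ (getElem?_eq_some_iff.mp hex.choose_spec).1
    rw [hvar x hex.choose i hex.choose_spec hi, getElem?_eq_getElem hlt]
    simp [σ, hex, getElem?_eq_getElem hlt]
  refine ⟨σ, ext_getElem? fun i => ?_⟩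
  rw [getElem?_map]
  cases hpi : p[i]? with
  | none => simpa [hlen] using hpi
  | some e =>
    cases e with
    | inl a => simpa using hterm i a hpi
    | inr x => simpa using hσ x i hpi

theorem nonerasing_pattern_language_characterization {A Ξ : Type*}
    (p : List (A ⊕ Ξ)) (w : List A) :
    (∃ σ : Ξ → List A, (∀ x : Ξ, Sum.inr x ∈ p → σ x ≠ []) ∧ w = applySubst σ p) ↔
      ∃ L : List (List A), L.length = p.length ∧ w = L.flatten ∧
        (∀ i, i < p.length →
          (∀ a : A, p[i]? = some (Sum.inl a) → L[i]? = some [a]) ∧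
          (∀ x : Ξ, p[i]? = some (Sum.inr x) → L[i]? ≠ some [])) ∧
        (∀ j, j < p.length → ∀ x : Ξ, p[j]? = some (Sum.inr x) →
          ∀ i, i < j → p[i]? = some (Sum.inr x) →
            (∀ i', i < i' → i' < j → p[i']? ≠ some (Sum.inr x)) →
            L[j]? = L[i]?) := by
  constructor
  · rintro ⟨σ, hσ, rfl⟩
    refine ⟨p.map (Sum.elim (fun a => [a]) σ), List.length_map _, rfl, fun i _ => ⟨?_, ?_⟩, ?_⟩
    · intro a ha
      simp [ha]
    · intro x hx
      simpa [hx] using hσ x (List.mem_of_getElem? hx)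
    · intro j _ x hj i _ hi _
      simp [hj, hi]
  · rintro ⟨L, hlen, rfl, hpos, hlast⟩
    have hbound : ∀ {i : ℕ} {e},  p[i]? = some e → i < p.length := fun h =>
      (List.getElem?_eq_some_iff.mp h).1
    have hvar : ∀ (x : Ξ) (i j : ℕ), p[i]? = some (Sum.inr x) → p[j]? = some (Sum.inr x) →
        L[j]? = L[i]? := by
      intro x i j hi hj
      have hstep := fun i j hij hi hj hgap => hlast j (hbound hj) x hj i hij hi hgap
      rcases le_total i j with hij | hji
      · exact Nat.eq_of_eq_on_consecutive hstep hi hj hij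
      · exact (Nat.eq_of_eq_on_consecutive hstep hj hi hji).symm
    obtain ⟨σ, hL⟩ := List.exists_eq_map_sumElim_of_getElem? hlen
      (fun i a h => (hpos i (hbound h)).1 a h) hvar
    refine ⟨σ, fun x hx => ?_, by rw [hL, applySubst]⟩
    obtain ⟨i, hi⟩ := List.getElem?_of_mem hx
    have hne := (hpos i (hbound hi)).2 x hi
    rw [hL, List.getElem?_map, hi] at hne
    simpa using hne
end
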